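/- arXiv:2009.10789 — 2 statements merged into one kernel-verified Lean document; each statement's English description precedes it below -/
import Mathlib

section
/- Let $0 < \delta < 1/100$ and define sequences $\alpha_0 = \beta_0 = 1$, $\alpha_{j+1} = \alpha_j \frac{1 - 5\sqrt{\delta/\alpha_j}}{2}$, $\beta_{j+1} = \beta_j \frac{1 + 5\sqrt{\delta/\alpha_j}}{2}$ (defined as long as $\alpha_j > 0$). Then there exist an absolute constant $C > 0$ (independent of $\delta$) and a natural number $L$ such that $\alpha_j \ge 100\delta$ for all $j \le L$, $25\delta \le \alpha_{L+1} < 100\delta$, and $\beta_{L+1} < C\,\alpha_{L+1}$. -/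
/-!
Write `tⱼ = √(δ / αⱼ)`. As long as `αⱼ ≥ 100 δ` we have `tⱼ ≤ 1/10`, so each step divides `α` by a
factor between `2` and `4`; hence `α` falls below `100 δ` at some first index `L + 1`, with
`α_{L+1} ≥ 25 δ`. Since `α` at least halves, `√2 tⱼ ≤ tⱼ₊₁`, so `∑_{j ≤ L} tⱼ` is dominated by a
geometric series ending at `t_L ≤ 1/10` and stays below `7/20`. Finally the ratio `βⱼ / αⱼ` is
multiplied at each step by `(1 + 5 tⱼ) / (1 - 5 tⱼ) ≤ exp (20 tⱼ)`, so `β_{L+1} < exp 7 · α_{L+1}`.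
-/

open Real Finset

lemma sqrt_div_le_one_div_ten {δ a : ℝ} (hδ : 0 ≤ δ) (ha : 100 * δ ≤ a) : √(δ / a) ≤ 1 / 10 := by
  rw [sqrt_le_left (by norm_num)]
  exact div_le_of_le_mul₀ (by linarith) (by norm_num) (by linarith)

lemma one_add_le_exp_mul_one_sub {t : ℝ} (ht₀ : 0 ≤ t) (ht : t ≤ 1 / 10) :
    1 + 5 * t ≤ exp (20 * t) * (1 - 5 * t) := by
  have hexp : 1 + 20 * t ≤ exp (20 * t) := by linarith [add_one_le_exp (20 * t)]
  calc 1 + 5 * t ≤ (1 + 20 * t) * (1 - 5 * t) := by nlinarith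
    _ ≤ exp (20 * t) * (1 - 5 * t) := by gcongr; linarith

lemma sqrt_two_mul_sqrt_div_le {δ a b : ℝ} (hδ : 0 ≤ δ) (hb : 0 < b) (hba : b ≤ a / 2) :
    √2 * √(δ / a) ≤ √(δ / b) := by
  rw [← sqrt_mul zero_le_two]
  apply sqrt_le_sqrt
  rw [mul_div_assoc', div_le_div_iff₀ (by linarith) hb]
  nlinarith

lemma sub_one_mul_sum_range_le {t : ℕ → ℝ} {q : ℝ} {n : ℕ} (h₀ : 0 ≤ t 0)
    (h : ∀ j < n, q * t j ≤ t (j + 1)) : (q - 1) * ∑ j ∈ range (n + 1), t j ≤ q * t n := by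
  induction n with
  | zero => simp only [zero_add, range_one, sum_singleton]; linarith
  | succ n ih =>
    have := ih fun j hj => h j (by omega)
    have := h n (by omega)
    rw [sum_range_succ]
    nlinarith

lemma exists_lt_of_le_half {α : ℕ → ℝ} {ε : ℝ} (hε : 0 < ε)
    (hhalf : ∀ j, 0 ≤ α j → α (j + 1) ≤ α j / 2) : ∃ n, α n < ε := by
  by_contra! h
  have hdecay : ∀ n, α n ≤ α 0 * (1 / 2) ^ n := by
    intro n
    induction n with
    | zero => simp
    | succ n ih =>
      calc α (n + 1) ≤ α n / 2 := hhalf n (hε.le.trans (h n))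
        _ ≤ α 0 * (1 / 2) ^ (n + 1) := by rw [pow_succ]; linarith
  obtain ⟨n, hn⟩ := exists_pow_lt_of_lt_one (div_pos hε (hε.trans_le (h 0))) one_half_lt_one
  have := hdecay n
  have := h n
  rw [lt_div_iff₀ (hε.trans_le (h 0))] at hn
  linarith

section Iteration

variable {δ : ℝ} {α β : ℕ → ℝ}

lemma alpha_succ_le_half (hα : ∀ j, α (j + 1) = α j * (1 - 5 * √(δ / α j)) / 2) {j : ℕ}
    (hj : 0 ≤ α j) : α (j + 1) ≤ α j / 2 := by
  rw [hα]
  nlinarith [sqrt_nonneg (δ / α j)]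

lemma alpha_div_four_le_succ (hα : ∀ j, α (j + 1) = α j * (1 - 5 * √(δ / α j)) / 2)
    (hδ : 0 ≤ δ) {j : ℕ} (hj : 100 * δ ≤ α j) : α j / 4 ≤ α (j + 1) := by
  rw [hα]
  nlinarith [sqrt_div_le_one_div_ten hδ hj]

lemma exists_forall_le_and_alpha_succ_lt
    (hα : ∀ j, α (j + 1) = α j * (1 - 5 * √(δ / α j)) / 2) (hδ : 0 < δ) (h₀ : 100 * δ ≤ α 0) :
    ∃ L, (∀ j ≤ L, 100 * δ ≤ α j) ∧ α (L + 1) < 100 * δ := by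
  obtain ⟨n, hn⟩ :=
    exists_lt_of_le_half (ε := 100 * δ) (by positivity) fun j => alpha_succ_le_half hα (j := j)
  -- The predicate "some `αᵢ` with `i ≤ n` is small" is monotone, so its first switch is at `L + 1`.
  obtain ⟨L, hbig, i, hi, hsmall⟩ := Nat.exists_not_and_succ_of_not_zero_of_exists
    (p := fun n => ∃ i ≤ n, α i < 100 * δ) (by simpa using h₀) ⟨n, n, le_rfl, hn⟩
  push Not at hbig
  obtain rfl : i = L + 1 := by
    by_contra hne
    exact (hbig i (by omega)).not_gt hsmall
  exact ⟨L, hbig, hsmall⟩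

lemma sum_sqrt_div_alpha_lt (hα : ∀ j, α (j + 1) = α j * (1 - 5 * √(δ / α j)) / 2)
    (hδ : 0 < δ) {L : ℕ} (hbig : ∀ j ≤ L, 100 * δ ≤ α j) :
    ∑ j ∈ range (L + 1), 20 * √(δ / α j) < 7 := by
  have hgeo := sub_one_mul_sum_range_le (t := fun j => √(δ / α j)) (q := √2) (n := L)
    (sqrt_nonneg _) fun j hj => sqrt_two_mul_sqrt_div_le hδ.le
      (by linarith [hbig (j + 1) hj]) (alpha_succ_le_half hα (by linarith [hbig j (by omega)]))
  have hlast := sqrt_div_le_one_div_ten hδ.le (hbig L le_rfl)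
  -- `(√2 - 1) ∑ 20 tⱼ ≤ 2 √2 < 7 (√2 - 1)` because `√2 > 7/5`.
  have hsqrt2 : 7 / 5 < √2 := by rw [lt_sqrt] <;> norm_num
  rw [← mul_sum]
  nlinarith

lemma beta_le_exp_sum_mul_alpha (hα : ∀ j, α (j + 1) = α j * (1 - 5 * √(δ / α j)) / 2)
    (hβ : ∀ j, β (j + 1) = β j * (1 + 5 * √(δ / α j)) / 2) (hδ : 0 ≤ δ) (h₀ : β 0 ≤ α 0)
    {n : ℕ} (hbig : ∀ j < n, 100 * δ ≤ α j) :
    β n ≤ exp (∑ j ∈ range n, 20 * √(δ / α j)) * α n := by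
  induction n with
  | zero => simpa using h₀
  | succ n ih =>
    set t := √(δ / α n)
    have ht : t ≤ 1 / 10 := sqrt_div_le_one_div_ten hδ (hbig n (by omega))
    have hαn : 0 ≤ α n := by linarith [hbig n (by omega)]
    have hE : 0 ≤ exp (∑ j ∈ range n, 20 * √(δ / α j)) * α n := by positivity
    calc β (n + 1) = β n * ((1 + 5 * t) / 2) := by rw [hβ]; ring
      _ ≤ exp (∑ j ∈ range n, 20 * √(δ / α j)) * α n * ((1 + 5 * t) / 2) := by
        gcongr
        exact ih fun j hj => hbig j (by omega)
      _ ≤ exp (∑ j ∈ range n, 20 * √(δ / α j)) * α n * (exp (20 * t) * (1 - 5 * t) / 2) := by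
        gcongr
        exact one_add_le_exp_mul_one_sub (sqrt_nonneg _) ht
      _ = exp (∑ j ∈ range (n + 1), 20 * √(δ / α j)) * α (n + 1) := by
        rw [sum_range_succ, exp_add, hα]; ring

end Iteration

theorem NOU_iteration_lemma :
    ∃ C : ℝ, 0 < C ∧
      ∀ δ : ℝ, 0 < δ → δ < 1 / 100 →
        ∀ α β : ℕ → ℝ, α 0 = 1 → β 0 = 1 →
          (∀ j, α (j + 1) = α j * (1 - 5 * Real.sqrt (δ / α j)) / 2) →
          (∀ j, β (j + 1) = β j * (1 + 5 * Real.sqrt (δ / α j)) / 2) →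
          ∃ L : ℕ, (∀ j ≤ L, 100 * δ ≤ α j) ∧
            25 * δ ≤ α (L + 1) ∧ α (L + 1) < 100 * δ ∧
            β (L + 1) < C * α (L + 1) := by
  refine ⟨exp 7, exp_pos 7, fun δ hδ hδ₁ α β hα₀ hβ₀ hα hβ => ?_⟩
  obtain ⟨L, hbig, hsmall⟩ :=
    exists_forall_le_and_alpha_succ_lt hα hδ (by rw [hα₀]; linarith)
  have hge : 25 * δ ≤ α (L + 1) := by
    linarith [alpha_div_four_le_succ hα hδ.le (hbig L le_rfl), hbig L le_rfl]
  refine ⟨L, hbig, hge, hsmall, ?_⟩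
  calc β (L + 1) ≤ exp (∑ j ∈ range (L + 1), 20 * √(δ / α j)) * α (L + 1) :=
        beta_le_exp_sum_mul_alpha hα hβ hδ.le (by rw [hα₀, hβ₀])
          fun j hj => hbig j (Nat.lt_succ_iff.mp hj)
    _ < exp 7 * α (L + 1) := by
        have : 0 < α (L + 1) := by linarith
        gcongr
        exact sum_sqrt_div_alpha_lt hα hδ hbig
end

section
/- Let $u_1,\dots,u_N$ be an orthonormal system in $L_2(\Omega,\mu)$ with $\|u_i\|_{L_4(\Omega,\mu)} < \infty$ for all $i$, where $\mu$ is a probability measure. Then for any $\delta > 0$ there exists a finite set $\Omega_M = \{x^1,\dots,x^M\} \subset \Omega$ such that for every $f \in \mathrm{span}(u_1,\dots,u_N)$, $\big| \|f\|_{L_2(\Omega,\mu)}^2 - \frac{1}{M}\sum_{j=1}^M |f(x^j)|^2 \big| \le \delta\, \|f\|_{L_2(\Omega,\mu)}^2$. -/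
/-!
`gram u y = (conj (u i y) * u k y)ᵢₖ` is integrable with mean the identity matrix, and for
`f = ∑ cᵢ uᵢ` the value `|f y|²` is a linear form of `gram u y` of norm at most
`(∑ |cᵢ|)² ≤ N ∑ |cᵢ|²`. The mean of an integrable vector-valued function lies in the closed
convex hull of its values, and every point of that hull is a limit of equal-weight averages of
values: round the convex weights to multiples of `1 / M`. Hence an equal-weight average of
`gram u` within `δ / (N + 1)` of the identity discretizes every `‖f‖²` with relative error `δ`.
-/

open MeasureTheory
open scoped BigOperators

lemma exists_nat_sum_eq_abs_sub_le {ι : Type*} [Fintype ι] {a : ι → ℝ} (ha : ∀ i, 0 ≤ a i)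
    (hsum : ∑ i, a i = 1) (M : ℕ) :
    ∃ m : ι → ℕ, ∑ i, m i = M ∧ ∀ i, |(m i : ℝ) - M * a i| ≤ Fintype.card ι := by
  classical
  have hne : (Finset.univ : Finset ι).Nonempty :=
    Finset.nonempty_of_sum_ne_zero (by rw [hsum]; exact one_ne_zero)
  obtain ⟨i₀, -⟩ := id hne
  set F := ∑ i, ⌊M * a i⌋₊
  have hfloor_le : ∀ i, (⌊M * a i⌋₊ : ℝ) ≤ M * a i := fun i =>
    Nat.floor_le (mul_nonneg M.cast_nonneg (ha i))
  have hF_le : (F : ℝ) ≤ M :=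
    calc (F : ℝ) = ∑ i, (⌊M * a i⌋₊ : ℝ) := by push_cast [F]; rfl
      _ ≤ ∑ i, M * a i := Finset.sum_le_sum fun i _ => hfloor_le i
      _ = M := by rw [← Finset.mul_sum, hsum, mul_one]
  have hF_gt : (M : ℝ) - Fintype.card ι < F :=
    calc (M : ℝ) - Fintype.card ι = ∑ i, (M * a i - 1) := by
          simp [Finset.sum_sub_distrib, ← Finset.mul_sum, hsum]
      _ < ∑ i, (⌊M * a i⌋₊ : ℝ) := Finset.sum_lt_sum_of_nonempty hne
          fun i _ => by linarith [Nat.lt_floor_add_one (M * a i)]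
      _ = F := by push_cast [F]; rfl
  have hFM : F ≤ M := by exact_mod_cast hF_le
  -- Round down, then put the whole deficit `M - F < card ι` on `i₀`.
  set d : ι → ℕ := fun i => if i = i₀ then M - F else 0
  have hd : ∀ i, (d i : ℝ) ≤ M - F := fun i => by
    by_cases h : i = i₀
    · simp [d, h, Nat.cast_sub hFM]
    · simp [d, h, hF_le]
  refine ⟨fun i => ⌊M * a i⌋₊ + d i, ?_, fun i => ?_⟩
  · rw [Finset.sum_add_distrib, Finset.sum_ite_eq' Finset.univ i₀, if_pos (Finset.mem_univ _)]
    omega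
  · have hcard : (1 : ℝ) ≤ Fintype.card ι := by exact_mod_cast Finset.card_pos.2 hne
    rw [abs_le]
    push_cast
    constructor <;> linarith [hd i, hfloor_le i, Nat.lt_floor_add_one (M * a i),
      (d i).cast_nonneg (α := ℝ)]

lemma exists_sum_comp_eq_sum_nsmul {ι E : Type*} [Fintype ι] [AddCommMonoid E] (m : ι → ℕ)
    (f : ι → E) : ∃ σ : Fin (∑ i, m i) → ι, ∑ j, f (σ j) = ∑ i, m i • f i := by
  let e : (Σ i, Fin (m i)) ≃ Fin (∑ i, m i) := Fintype.equivFinOfCardEq (by simp)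
  refine ⟨fun j => (e.symm j).1, ?_⟩
  rw [e.symm.sum_comp (fun s => f s.1), Fintype.sum_sigma]
  simp

section EqualWeights

variable {Ω E : Type*} [NormedAddCommGroup E] [NormedSpace ℝ E] {G : Ω → E} {ε : ℝ}

lemma exists_average_near_of_mem_convexHull {v : E} (hv : v ∈ convexHull ℝ (Set.range G))
    (hε : 0 < ε) :
    ∃ M : ℕ, 0 < M ∧ ∃ x : Fin M → Ω, ‖(M : ℝ)⁻¹ • ∑ j, G (x j) - v‖ ≤ ε := by
  obtain ⟨ι, _, a, z, ha, hsum, hz, rfl⟩ := mem_convexHull_iff_exists_fintype.1 hv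
  choose y hy using hz
  set n : ℝ := (Fintype.card ι : ℝ)
  obtain ⟨M, hM⟩ := exists_nat_gt ((n * ∑ i, ‖z i‖) / ε)
  have hMpos : (0 : ℝ) < M + 1 := by positivity
  obtain ⟨m, hmM, hm⟩ := exists_nat_sum_eq_abs_sub_le ha hsum (M + 1)
  obtain ⟨σ, hσ⟩ := exists_sum_comp_eq_sum_nsmul m z
  refine ⟨∑ i, m i, by omega, y ∘ σ, ?_⟩
  have hcoeff : ∀ i, |(m i : ℝ) / (M + 1) - a i| ≤ n / (M + 1) := fun i => by
    rw [div_sub' hMpos.ne', abs_div, abs_of_pos hMpos]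
    gcongr
    simpa [mul_comm] using hm i
  calc ‖((∑ i, m i : ℕ) : ℝ)⁻¹ • ∑ j, G (y (σ j)) - ∑ i, a i • z i‖
      = ‖∑ i, ((m i : ℝ) / (M + 1) - a i) • z i‖ := by
        simp only [hy, hσ, hmM, Finset.smul_sum, sub_smul, Finset.sum_sub_distrib]
        push_cast
        simp only [← Nat.cast_smul_eq_nsmul ℝ, smul_smul, inv_mul_eq_div]
    _ ≤ ∑ i, n / (M + 1) * ‖z i‖ := norm_sum_le_of_le _ fun i _ => by
        rw [norm_smul, Real.norm_eq_abs]
        gcongr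
        exact hcoeff i
    _ ≤ ε := by
        rw [← Finset.mul_sum, div_mul_eq_mul_div, div_le_iff₀ hMpos]
        rw [div_lt_iff₀ hε] at hM
        nlinarith

lemma exists_average_near_of_mem_closure_convexHull {v : E}
    (hv : v ∈ closure (convexHull ℝ (Set.range G))) (hε : 0 < ε) :
    ∃ M : ℕ, 0 < M ∧ ∃ x : Fin M → Ω, ‖(M : ℝ)⁻¹ • ∑ j, G (x j) - v‖ ≤ ε := by
  obtain ⟨w, hw, hwv⟩ := Metric.mem_closure_iff.1 hv (ε / 2) (by positivity)
  obtain ⟨M, hM, x, hx⟩ := exists_average_near_of_mem_convexHull hw (half_pos hε)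
  rw [dist_eq_norm, norm_sub_rev] at hwv
  refine ⟨M, hM, x, ?_⟩
  calc ‖(M : ℝ)⁻¹ • ∑ j, G (x j) - v‖ ≤ ‖(M : ℝ)⁻¹ • ∑ j, G (x j) - w‖ + ‖w - v‖ :=
        norm_sub_le_norm_sub_add_norm_sub _ _ _
    _ ≤ ε := by linarith

lemma exists_average_near_integral [CompleteSpace E] [MeasurableSpace Ω] {μ : Measure Ω}
    [IsProbabilityMeasure μ] (hG : Integrable G μ) (hε : 0 < ε) :
    ∃ M : ℕ, 0 < M ∧ ∃ x : Fin M → Ω, ‖(M : ℝ)⁻¹ • ∑ j, G (x j) - ∫ y, G y ∂μ‖ ≤ ε :=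
  exists_average_near_of_mem_closure_convexHull
    ((convex_convexHull ℝ _).closure.integral_mem isClosed_closure
      (Filter.Eventually.of_forall fun y => subset_closure (subset_convexHull ℝ _ ⟨y, rfl⟩)) hG)
    hε

end EqualWeights

section Gram

variable {ι Ω : Type*} [Fintype ι]

noncomputable def sesqForm (c : ι → ℂ) : (ι → ι → ℂ) →L[ℂ] ℂ :=
  ∑ i, ∑ k, (starRingEnd ℂ (c i) * c k) •
    ((ContinuousLinearMap.proj (R := ℂ) (φ := fun _ : ι => ℂ) k).comp
      (ContinuousLinearMap.proj (φ := fun _ : ι => ι → ℂ) i))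

lemma sesqForm_apply (c : ι → ℂ) (A : ι → ι → ℂ) :
    sesqForm c A = ∑ i, ∑ k, starRingEnd ℂ (c i) * c k * A i k := by
  simp [sesqForm]

lemma norm_sesqForm_apply_le (c : ι → ℂ) (A : ι → ι → ℂ) :
    ‖sesqForm c A‖ ≤ (∑ i, ‖c i‖) ^ 2 * ‖A‖ := by
  rw [sesqForm_apply, sq, Finset.sum_mul_sum, Finset.sum_mul]
  refine norm_sum_le_of_le _ fun i _ => ?_
  rw [Finset.sum_mul]
  refine norm_sum_le_of_le _ fun k _ => ?_
  rw [norm_mul, norm_mul, RCLike.norm_conj]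
  gcongr
  exact (norm_le_pi_norm (A i) k).trans (norm_le_pi_norm A i)

lemma sesqForm_kronecker (c : ι → ℂ) [DecidableEq ι] :
    sesqForm c (fun i k => if i = k then 1 else 0) = ((∑ i, ‖c i‖ ^ 2 : ℝ) : ℂ) := by
  simp [sesqForm_apply, RCLike.conj_mul]

def gram (u : ι → Ω → ℂ) (y : Ω) : ι → ι → ℂ := fun i k => starRingEnd ℂ (u i y) * u k y

variable {u : ι → Ω → ℂ}

lemma sesqForm_gram (c : ι → ℂ) (y : Ω) :
    sesqForm c (gram u y) = ((‖(∑ i, c i • u i) y‖ ^ 2 : ℝ) : ℂ) := by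
  simp only [sesqForm_apply, gram, Complex.ofReal_pow, ← Complex.conj_mul', Finset.sum_apply,
    Pi.smul_apply, smul_eq_mul, map_sum, map_mul, Finset.sum_mul_sum]
  exact Finset.sum_congr rfl fun i _ => Finset.sum_congr rfl fun k _ => by ring

lemma ofReal_average_norm_sq (c : ι → ℂ) {M : ℕ} (x : Fin M → Ω) :
    (((M : ℝ)⁻¹ * ∑ j, ‖(∑ i, c i • u i) (x j)‖ ^ 2 : ℝ) : ℂ) =
      sesqForm c ((M : ℝ)⁻¹ • ∑ j, gram u (x j)) := by
  rw [(sesqForm c).map_smul_of_tower, map_sum, Complex.real_smul]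
  push_cast [sesqForm_gram]
  rfl

variable [MeasurableSpace Ω] {μ : Measure Ω}

lemma integrable_gram (hu : ∀ i, MemLp (u i) 2 μ) : Integrable (gram u) μ :=
  Integrable.of_eval fun i => Integrable.of_eval fun k => (hu i).star.integrable_mul (hu k)

lemma integral_gram [DecidableEq ι] (hu : ∀ i, MemLp (u i) 2 μ)
    (horth : ∀ i k, ∫ x, (starRingEnd ℂ) (u i x) * u k x ∂μ = if i = k then 1 else 0) :
    ∫ y, gram u y ∂μ = fun i k => if i = k then 1 else 0 := by
  ext i k
  rw [eval_integral (integrable_gram hu).eval, eval_integral]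
  · exact horth i k
  · exact ((integrable_gram hu).eval i).eval

lemma ofReal_integral_norm_sq (hu : ∀ i, MemLp (u i) 2 μ) (c : ι → ℂ) :
    ((∫ y, ‖(∑ i, c i • u i) y‖ ^ 2 ∂μ : ℝ) : ℂ) = sesqForm c (∫ y, gram u y ∂μ) := by
  rw [← integral_complex_ofReal, ← (sesqForm c).integral_comp_comm (integrable_gram hu)]
  simp only [sesqForm_gram]

lemma integral_norm_sq_sum_smul [DecidableEq ι] (hu : ∀ i, MemLp (u i) 2 μ)
    (horth : ∀ i k, ∫ x, (starRingEnd ℂ) (u i x) * u k x ∂μ = if i = k then 1 else 0)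
    (c : ι → ℂ) :
    ∫ y, ‖(∑ i, c i • u i) y‖ ^ 2 ∂μ = ∑ i, ‖c i‖ ^ 2 := by
  apply Complex.ofReal_injective
  rw [ofReal_integral_norm_sq hu, integral_gram hu horth, sesqForm_kronecker]

lemma abs_integral_norm_sq_sub_average_le (hu : ∀ i, MemLp (u i) 2 μ) (c : ι → ℂ) {M : ℕ}
    (x : Fin M → Ω) :
    |∫ y, ‖(∑ i, c i • u i) y‖ ^ 2 ∂μ - (M : ℝ)⁻¹ * ∑ j, ‖(∑ i, c i • u i) (x j)‖ ^ 2| ≤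
      (∑ i, ‖c i‖) ^ 2 * ‖(M : ℝ)⁻¹ • ∑ j, gram u (x j) - ∫ y, gram u y ∂μ‖ := by
  rw [← Real.norm_eq_abs, ← Complex.norm_real, Complex.ofReal_sub, ofReal_integral_norm_sq hu,
    ofReal_average_norm_sq, ← map_sub, norm_sub_rev]
  exact norm_sesqForm_apply_le _ _

end Gram

theorem pre_discretization (N : ℕ)
    {Ω : Type*} [MeasurableSpace Ω] (μ : Measure Ω) [IsProbabilityMeasure μ]
    (u : Fin N → Ω → ℂ)
    (horth : ∀ i k, ∫ x, (starRingEnd ℂ) (u i x) * u k x ∂μ =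
      if i = k then 1 else 0)
    (hL4 : ∀ i, MemLp (u i) 4 μ) :
    ∀ δ : ℝ, 0 < δ →
      ∃ (M : ℕ) (_ : 0 < M) (x : Fin M → Ω),
        ∀ f ∈ Submodule.span ℂ (Set.range u),
          |(∫ y, ‖f y‖ ^ 2 ∂μ) - (1 / (M : ℝ)) * ∑ j, ‖f (x j)‖ ^ 2| ≤
            δ * ∫ y, ‖f y‖ ^ 2 ∂μ := by
  intro δ hδ
  have hu : ∀ i, MemLp (u i) 2 μ := fun i => (hL4 i).mono_exponent (by norm_num)
  obtain ⟨M, hM, x, hx⟩ :=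
    exists_average_near_integral (integrable_gram hu) (show 0 < δ / (N + 1) by positivity)
  refine ⟨M, hM, x, fun f hf => ?_⟩
  obtain ⟨c, rfl⟩ := (Submodule.mem_span_range_iff_exists_fun ℂ).1 hf
  have hS : 0 ≤ ∑ i, ‖c i‖ ^ 2 := by positivity
  rw [one_div]
  calc _ ≤ (∑ i, ‖c i‖) ^ 2 * (δ / (N + 1)) :=
        (abs_integral_norm_sq_sub_average_le hu c x).trans (by gcongr)
    _ ≤ (N * ∑ i, ‖c i‖ ^ 2) * (δ / (N + 1)) := by
        gcongr
        simpa using sq_sum_le_card_mul_sum_sq (s := Finset.univ) (f := fun i => ‖c i‖)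
    _ ≤ δ * ∑ i, ‖c i‖ ^ 2 := by
        rw [mul_div_assoc', div_le_iff₀ (by positivity)]
        nlinarith
    _ = δ * ∫ y, ‖(∑ i, c i • u i) y‖ ^ 2 ∂μ := by rw [integral_norm_sq_sum_smul hu horth]
end
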